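/- arXiv:2306.12023 — 3 statements merged into one kernel-verified Lean document; each statement's English description precedes it below -/
import Mathlib

section
/- Let Δ, m, k, t be positive integers and let 𝓖 = {G_1,…,G_t} be a family of graphs on the same vertex set V(𝓖) satisfying (1) |Γ_𝓖(X)| ≥ Δ|X| + 1 for all X ⊆ V(𝓖) × [t] with 1 ≤ |X| ≤ m, and (2) |Γ_𝓖(X)| ≥ Δ|X| + k for all X ⊆ V(𝓖) × [t] with m < |X| ≤ 2m. Let H be a graph with |V(H)| ≤ k − 1, let f : E(H) → [t] be an edge-coloring such that the [t]-colored graph 𝓗 = (H,f) satisfies Δ_r(𝓗) ≤ Δ for every r ∈ [t], and let φ be a 2m-good embedding of 𝓗 into 𝓖. Let H_* be a graph obtained from H by adding a new vertex of degree 1, and let f_* : E(H_*) → [t] be an edge-coloring agreeing with f on E(H) such that 𝓗_* = (H_*, f_*) satisfies Δ_r(𝓗_*) ≤ Δ for each r ∈ [t]. Then there is a 2m-good embedding φ_* of 𝓗_* into 𝓖 that extends φ. -/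
/-- The colorful neighborhood `Γ_𝓖(X) = ⋃_{(v,r) ∈ X} Γ_{G_r}(v)`. -/
def famNbhd {V : Type*} [Fintype V] [DecidableEq V] {t : ℕ} (G : Fin t → SimpleGraph V)
    [∀ i, DecidableRel (G i).Adj] (X : Finset (V × Fin t)) : Finset V :=
  X.biUnion fun p => (G p.2).neighborFinset p.1

/-- The `r`-degree of the `φ`-preimage of `v` in the `[t]`-colored graph `(H, f)`;
this is `0` when `v` is not in the image of `φ`. -/
noncomputable def preDeg {V W : Type*} (H : SimpleGraph W) {t : ℕ} (f : Sym2 W → Fin t)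
    (φ : W → V) (r : Fin t) (v : V) : ℕ :=
  {u : W | ∃ w, φ w = v ∧ H.Adj w u ∧ f s(w, u) = r}.ncard

/-- The quantity `R(X, φ) = |Γ_𝓖(X) \ φ(V(H))| − Σ_{(v,r) ∈ X} (Δ − D_{𝓗,r}(φ⁻¹(v)))`. -/
noncomputable def Rval {V W : Type*} [Fintype V] [DecidableEq V] [Fintype W] {t : ℕ}
    (G : Fin t → SimpleGraph V) [∀ i, DecidableRel (G i).Adj]
    (H : SimpleGraph W) (f : Sym2 W → Fin t) (Δ : ℕ) (φ : W → V)
    (X : Finset (V × Fin t)) : ℤ :=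
  ((famNbhd G X \ Finset.image φ Finset.univ).card : ℤ)
    - ∑ p ∈ X, ((Δ : ℤ) - (preDeg H f φ p.2 p.1 : ℤ))

/-- `φ` is an embedding of the `[t]`-colored graph `(H, f)` into the family `G`. -/
def IsColEmb {V W : Type*} {t : ℕ} (G : Fin t → SimpleGraph V)
    (H : SimpleGraph W) (f : Sym2 W → Fin t) (φ : W → V) : Prop :=
  Function.Injective φ ∧ ∀ u v : W, H.Adj u v → (G (f s(u, v))).Adj (φ u) (φ v)

/-- `φ` is an `s`-good embedding: `R(X, φ) ≥ 0` for every `X` with `|X| ≤ s`. -/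
noncomputable def IsGood {V W : Type*} [Fintype V] [DecidableEq V] [Fintype W] {t : ℕ}
    (G : Fin t → SimpleGraph V) [∀ i, DecidableRel (G i).Adj]
    (H : SimpleGraph W) (f : Sym2 W → Fin t) (Δ : ℕ) (φ : W → V) (s : ℕ) : Prop :=
  ∀ X : Finset (V × Fin t), X.card ≤ s → 0 ≤ Rval G H f Δ φ X

/-!
Let `r₀` be the colour of the new edge and call `X` tight if `|X| ≤ m`, `R(X, φ) ≤ 0` and
`(φ u₀, r₀) ∉ X`. The function `R(·, φ)` is submodular, and condition (2) gives `R(X, φ) ≥ 1`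
when `m < |X| ≤ 2m`, because `φ` uses at most `k - 1` vertices; hence unions of tight sets are
tight and there is a largest tight set `T`. Some `r₀`-neighbour `y` of `φ u₀` outside the image of
`φ` avoids `Γ(T)`: otherwise adding `(φ u₀, r₀)` to `T` would make `R` negative, since `u₀` has
`r₀`-degree less than `Δ` in `H`. Sending the leaf to `y` changes `R(X)` by
`-[y ∈ Γ(X)] + [(φ u₀, r₀) ∈ X] + [(y, r₀) ∈ X]`, which can only make `R` negative on a tight
set, and tight sets avoid `y`.
-/

open Finset

section Neighbourhood

variable {V W : Type*} [Fintype V] [DecidableEq V] [Fintype W] {t : ℕ}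
  (G : Fin t → SimpleGraph V) [∀ i, DecidableRel (G i).Adj]

theorem famNbhd_union (X Y : Finset (V × Fin t)) :
    famNbhd G (X ∪ Y) = famNbhd G X ∪ famNbhd G Y :=
  union_biUnion

theorem famNbhd_insert (p : V × Fin t) (X : Finset (V × Fin t)) :
    famNbhd G (insert p X) = (G p.2).neighborFinset p.1 ∪ famNbhd G X :=
  biUnion_insert

theorem famNbhd_mono {X Y : Finset (V × Fin t)} (h : X ⊆ Y) : famNbhd G X ⊆ famNbhd G Y :=
  biUnion_subset_biUnion_of_subset_left _ h

variable (H : SimpleGraph W) (f : Sym2 W → Fin t) (Δ : ℕ) (φ : W → V)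

@[simp]
theorem Rval_empty : Rval G H f Δ φ ∅ = 0 := by
  simp [Rval, famNbhd]

theorem Rval_union_add_Rval_inter_le (X Y : Finset (V × Fin t)) :
    Rval G H f Δ φ (X ∪ Y) + Rval G H f Δ φ (X ∩ Y) ≤ Rval G H f Δ φ X + Rval G H f Δ φ Y := by
  have hsum := sum_union_inter (s₁ := X) (s₂ := Y) (f := fun p => (Δ : ℤ) - preDeg H f φ p.2 p.1)
  have hcard := card_union_add_card_inter
    (famNbhd G X \ image φ univ) (famNbhd G Y \ image φ univ)
  rw [← union_sdiff_distrib, ← famNbhd_union] at hcard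
  have hinter : famNbhd G (X ∩ Y) \ image φ univ
      ⊆ (famNbhd G X \ image φ univ) ∩ (famNbhd G Y \ image φ univ) := fun v hv => by
    simp only [mem_inter, mem_sdiff] at hv ⊢
    exact ⟨⟨famNbhd_mono G inter_subset_left hv.1, hv.2⟩,
      famNbhd_mono G inter_subset_right hv.1, hv.2⟩
  have := card_le_card hinter
  unfold Rval
  omega

theorem card_famNbhd_sub_le_Rval (X : Finset (V × Fin t)) :
    ((famNbhd G X).card : ℤ) - Fintype.card W - Δ * X.card ≤ Rval G H f Δ φ X := by
  have himage : (image φ univ).card ≤ Fintype.card W := card_image_le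
  have hsdiff := card_le_card_sdiff_add_card (s := famNbhd G X) (t := image φ univ)
  have hsum : ∑ p ∈ X, ((Δ : ℤ) - preDeg H f φ p.2 p.1) ≤ ∑ _p ∈ X, (Δ : ℤ) :=
    sum_le_sum fun p _ => sub_le_self _ (Int.natCast_nonneg _)
  rw [sum_const, nsmul_eq_mul, mul_comm] at hsum
  unfold Rval
  omega

end Neighbourhood

open Classical in
theorem Set.ncard_option {α : Type*} [Finite α] (S : Set (Option α)) :
    S.ncard = (some ⁻¹' S).ncard + if none ∈ S then 1 else 0 := by
  by_cases h : none ∈ S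
  · have hS : S = insert none (some '' (some ⁻¹' S)) := by
      ext (_ | a) <;> simp [h]
    conv_lhs => rw [hS]
    rw [Set.ncard_insert_of_notMem (by simp),
      Set.ncard_image_of_injective _ (Option.some_injective α), if_pos h]
  · have hS : S = some '' (some ⁻¹' S) := by
      ext (_ | a) <;> simp [h]
    conv_lhs => rw [hS]
    rw [Set.ncard_image_of_injective _ (Option.some_injective α), if_neg h, add_zero]

section ColorDegree

variable {V W : Type*} {t : ℕ}

noncomputable def colorDegree (H : SimpleGraph W) (f : Sym2 W → Fin t) (r : Fin t) (w : W) : ℕ :=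
  {u | H.Adj w u ∧ f s(w, u) = r}.ncard

variable (H : SimpleGraph W) (f : Sym2 W → Fin t) {φ : W → V}

theorem preDeg_apply_of_injective (hφ : φ.Injective) (r : Fin t) (w : W) :
    preDeg H f φ r (φ w) = colorDegree H f r w := by
  simp only [preDeg, colorDegree, hφ.eq_iff, exists_eq_left]

theorem preDeg_eq_zero_of_notMem_range {v : V} (hv : v ∉ Set.range φ) (r : Fin t) :
    preDeg H f φ r v = 0 := by
  rw [preDeg, ← Set.ncard_empty W]
  congr 1
  ext u
  simp only [Set.mem_ofPred_eq, Set.mem_empty_iff_false, iff_false]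
  rintro ⟨w, rfl, -⟩
  exact hv ⟨w, rfl⟩

variable {H f} {Hs : SimpleGraph (Option W)} {fs : Sym2 (Option W) → Fin t} {u₀ : W}

theorem colorDegree_none [Finite W] (hleaf : ∀ w : W, Hs.Adj none (some w) ↔ w = u₀)
    (r : Fin t) :
    colorDegree Hs fs r none = if fs s(none, some u₀) = r then 1 else 0 := by
  rw [colorDegree, Set.ncard_option, if_neg fun h => Hs.irrefl h.1, add_zero]
  split_ifs with hr
  · rw [← Set.ncard_singleton u₀]
    congr 1
    ext w
    simp only [Set.mem_preimage, Set.mem_ofPred_eq, hleaf, Set.mem_singleton_iff,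
      and_iff_left_iff_imp]
    rintro rfl
    exact hr
  · rw [← Set.ncard_empty W]
    congr 1
    ext w
    simp only [Set.mem_preimage, Set.mem_ofPred_eq, hleaf, Set.mem_empty_iff_false, iff_false]
    rintro ⟨rfl, h⟩
    exact hr h

open Classical in
theorem colorDegree_some [Finite W] (hHs : ∀ u v : W, Hs.Adj (some u) (some v) ↔ H.Adj u v)
    (hleaf : ∀ w : W, Hs.Adj none (some w) ↔ w = u₀)
    (hfs : ∀ u v : W, H.Adj u v → fs s(some u, some v) = f s(u, v)) (r : Fin t) (w : W) :
    colorDegree Hs fs r (some w) =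
      colorDegree H f r w + if w = u₀ ∧ fs s(none, some u₀) = r then 1 else 0 := by
  have hpre : some ⁻¹' {u | Hs.Adj (some w) u ∧ fs s(some w, u) = r} =
      {u | H.Adj w u ∧ f s(w, u) = r} := by
    ext u
    simp only [Set.mem_preimage, Set.mem_ofPred_eq, hHs]
    exact and_congr_right fun h => by rw [hfs w u h]
  have hnone : none ∈ {u | Hs.Adj (some w) u ∧ fs s(some w, u) = r} ↔
      w = u₀ ∧ fs s(none, some u₀) = r := by
    simp only [Set.mem_ofPred_eq, Hs.adj_comm (some w), hleaf, Sym2.eq_swap (a := some w)]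
    constructor <;> rintro ⟨rfl, h⟩ <;> exact ⟨rfl, h⟩
  rw [colorDegree, Set.ncard_option, hpre]
  simp only [hnone, colorDegree]

end ColorDegree

theorem Finset.exists_greatest_of_union_closed {α : Type*} [Fintype α] [DecidableEq α]
    {P : Finset α → Prop} (hempty : P ∅) (hunion : ∀ X Y, P X → P Y → P (X ∪ Y)) :
    ∃ T, P T ∧ ∀ X, P X → X ⊆ T := by
  classical
  refine ⟨(univ.filter P).sup id, ?_, fun X hX => le_sup (f := id) (by simpa using hX)⟩
  exact sup_induction hempty (fun X hX Y hY => hunion X Y hX hY) fun X hX => by simpa using hX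

section Tight

variable {V W : Type*} [Fintype V] [DecidableEq V] [Fintype W] {t : ℕ}
  (G : Fin t → SimpleGraph V) [∀ i, DecidableRel (G i).Adj]
  (H : SimpleGraph W) (f : Sym2 W → Fin t) (Δ : ℕ) (φ : W → V)

def IsTight (m : ℕ) (p : V × Fin t) (X : Finset (V × Fin t)) : Prop :=
  X.card ≤ m ∧ Rval G H f Δ φ X ≤ 0 ∧ p ∉ X

variable {G H f Δ φ} {m : ℕ} {p : V × Fin t}

theorem IsTight.union (hgood : IsGood G H f Δ φ (2 * m))
    (hbig : ∀ X : Finset (V × Fin t), m < X.card → X.card ≤ 2 * m → 0 < Rval G H f Δ φ X)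
    {X Y : Finset (V × Fin t)} (hX : IsTight G H f Δ φ m p X) (hY : IsTight G H f Δ φ m p Y) :
    IsTight G H f Δ φ m p (X ∪ Y) := by
  obtain ⟨hXm, hXR, hXp⟩ := hX
  obtain ⟨hYm, hYR, hYp⟩ := hY
  have hcard : (X ∪ Y).card ≤ 2 * m := (card_union_le X Y).trans (by omega)
  have hinter : 0 ≤ Rval G H f Δ φ (X ∩ Y) :=
    hgood _ ((card_le_card inter_subset_left).trans (by omega))
  have hR : Rval G H f Δ φ (X ∪ Y) ≤ 0 := by
    linarith [Rval_union_add_Rval_inter_le G H f Δ φ X Y]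
  refine ⟨?_, hR, by simp [hXp, hYp]⟩
  by_contra! hgt
  linarith [hbig _ hgt hcard]

theorem Rval_insert_of_subset_famNbhd {x : V} {r : Fin t} {T : Finset (V × Fin t)}
    (hxr : (x, r) ∉ T) (hsub : (G r).neighborFinset x \ image φ univ ⊆ famNbhd G T) :
    Rval G H f Δ φ (insert (x, r) T) = Rval G H f Δ φ T - (Δ - preDeg H f φ r x) := by
  have hN : famNbhd G (insert (x, r) T) \ image φ univ = famNbhd G T \ image φ univ := by
    rw [famNbhd_insert, union_sdiff_distrib, union_eq_right]
    exact fun v hv => mem_sdiff.2 ⟨hsub hv, (mem_sdiff.1 hv).2⟩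
  simp only [Rval, hN, sum_insert hxr]
  ring

theorem exists_neighbor_notMem_famNbhd_of_isTight (hm : 0 < m)
    (hgood : IsGood G H f Δ φ (2 * m))
    (hbig : ∀ X : Finset (V × Fin t), m < X.card → X.card ≤ 2 * m → 0 < Rval G H f Δ φ X)
    {x : V} {r : Fin t} (hdeg : preDeg H f φ r x < Δ) :
    ∃ y ∈ (G r).neighborFinset x \ image φ univ,
      ∀ X, IsTight G H f Δ φ m (x, r) X → y ∉ famNbhd G X := by
  obtain ⟨T, ⟨hTm, hTR, hTxr⟩, hT⟩ := exists_greatest_of_union_closed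
    (P := IsTight G H f Δ φ m (x, r)) ⟨by simp, by simp, by simp⟩
    fun X Y => IsTight.union hgood hbig
  -- otherwise adding `(x, r)` to the largest tight set `T` would make `R` negative
  by_contra! hcover
  have hsub : (G r).neighborFinset x \ image φ univ ⊆ famNbhd G T := fun y hy => by
    obtain ⟨X, hX, hyX⟩ := hcover y hy
    exact famNbhd_mono G (hT X hX) hyX
  have hgood' := hgood (insert (x, r) T) ((card_insert_le _ _).trans (by omega))
  rw [Rval_insert_of_subset_famNbhd hTxr hsub] at hgood'
  omega

end Tight

section Extension

variable {V W : Type*} {t : ℕ} {G : Fin t → SimpleGraph V} {H : SimpleGraph W}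
  {f : Sym2 W → Fin t} {φ : W → V} {y : V}
  {Hs : SimpleGraph (Option W)} {fs : Sym2 (Option W) → Fin t} {u₀ : W}

theorem isColEmb_optionElim (hemb : IsColEmb G H f φ) (hy : y ∉ Set.range φ)
    (hHs : ∀ u v : W, Hs.Adj (some u) (some v) ↔ H.Adj u v)
    (hleaf : ∀ w : W, Hs.Adj none (some w) ↔ w = u₀)
    (hfs : ∀ u v : W, H.Adj u v → fs s(some u, some v) = f s(u, v))
    (hyu₀ : (G (fs s(none, some u₀))).Adj y (φ u₀)) :
    IsColEmb G Hs fs (Option.elim' y φ) := by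
  refine ⟨Option.injective_iff.2 ⟨hemb.1, hy⟩, ?_⟩
  rintro (_ | u) (_ | v) huv
  · exact (Hs.irrefl huv).elim
  · obtain rfl := (hleaf v).1 huv
    exact hyu₀
  · obtain rfl := (hleaf u).1 huv.symm
    rw [Sym2.eq_swap]
    exact hyu₀.symm
  · rw [hHs] at huv
    simpa [hfs u v huv] using hemb.2 u v huv

theorem preDeg_optionElim [DecidableEq V] [Finite W] (hφ : φ.Injective) (hy : y ∉ Set.range φ)
    (hHs : ∀ u v : W, Hs.Adj (some u) (some v) ↔ H.Adj u v)
    (hleaf : ∀ w : W, Hs.Adj none (some w) ↔ w = u₀)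
    (hfs : ∀ u v : W, H.Adj u v → fs s(some u, some v) = f s(u, v)) (r : Fin t) (v : V) :
    preDeg Hs fs (Option.elim' y φ) r v = preDeg H f φ r v
      + (if (v, r) = (φ u₀, fs s(none, some u₀)) then 1 else 0)
      + (if (v, r) = (y, fs s(none, some u₀)) then 1 else 0) := by
  classical
  have hφs : (Option.elim' y φ).Injective := Option.injective_iff.2 ⟨hφ, hy⟩
  by_cases hvy : v = y
  · subst hvy
    have h := preDeg_apply_of_injective Hs fs hφs r none
    rw [Option.elim'_none] at h
    rw [h, colorDegree_none hleaf, preDeg_eq_zero_of_notMem_range H f hy]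
    have : v ≠ φ u₀ := fun h => hy ⟨u₀, h.symm⟩
    simp [this, eq_comm]
  by_cases hv : v ∈ Set.range φ
  · obtain ⟨w, rfl⟩ := hv
    have h := preDeg_apply_of_injective Hs fs hφs r (some w)
    rw [Option.elim'_some] at h
    rw [h, colorDegree_some hHs hleaf hfs, preDeg_apply_of_injective H f hφ]
    simp [hvy, hφ.eq_iff, eq_comm]
  · have hv' : v ∉ Set.range (Option.elim' y φ) := by
      rintro ⟨_ | w, hw⟩
      exacts [hvy hw.symm, hv ⟨w, hw⟩]
    rw [preDeg_eq_zero_of_notMem_range Hs fs hv', preDeg_eq_zero_of_notMem_range H f hv]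
    have : v ≠ φ u₀ := fun h => hv ⟨u₀, h.symm⟩
    simp [hvy, this]

variable [Fintype V] [DecidableEq V] [Fintype W] (G) [∀ i, DecidableRel (G i).Adj] (H f) (Δ : ℕ)

theorem Rval_optionElim (hy : y ∉ Set.range φ) {a b : V × Fin t}
    (hdeg : ∀ r v, preDeg Hs fs (Option.elim' y φ) r v = preDeg H f φ r v
      + (if (v, r) = a then 1 else 0) + (if (v, r) = b then 1 else 0))
    (X : Finset (V × Fin t)) :
    Rval G Hs fs Δ (Option.elim' y φ) X = Rval G H f Δ φ X
      - (if y ∈ famNbhd G X then 1 else 0) + (if a ∈ X then 1 else 0)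
      + (if b ∈ X then 1 else 0) := by
  have himage : image (Option.elim' y φ) univ = insert y (image φ univ) := by
    ext v
    simp [Option.exists, eq_comm]
  have hy' : y ∉ image φ univ := by simpa using hy
  have hcard : ((famNbhd G X \ image (Option.elim' y φ) univ).card : ℤ) =
      (famNbhd G X \ image φ univ).card - if y ∈ famNbhd G X then 1 else 0 := by
    rw [himage, sdiff_insert]
    split_ifs with hyX
    · have hy'' : y ∈ famNbhd G X \ image φ univ := mem_sdiff.2 ⟨hyX, hy'⟩
      rw [card_erase_of_mem hy'', Nat.cast_sub (card_pos.2 ⟨y, hy''⟩), Nat.cast_one]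
    · rw [erase_eq_of_notMem fun h => hyX (mem_sdiff.1 h).1, sub_zero]
  simp only [Rval, hcard, hdeg, Nat.cast_add, Nat.cast_ite, Nat.cast_one, Nat.cast_zero,
    Prod.mk.eta, ← sum_ite_eq' X a (fun _ => (1 : ℤ)), ← sum_ite_eq' X b (fun _ => (1 : ℤ))]
  have hsum : ∑ p ∈ X, ((Δ : ℤ) - (preDeg H f φ p.2 p.1 + (if p = a then 1 else 0)
      + (if p = b then 1 else 0))) = ∑ p ∈ X, ((Δ : ℤ) - preDeg H f φ p.2 p.1)
        - ∑ p ∈ X, (if p = a then 1 else 0) - ∑ p ∈ X, (if p = b then 1 else 0) := by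
    rw [← sum_sub_distrib, ← sum_sub_distrib]
    exact sum_congr rfl fun _ _ => by ring
  rw [hsum]
  ring

end Extension

section Goodness

variable {V W W' : Type*} [Fintype V] [DecidableEq V] [Fintype W] [Fintype W'] {t : ℕ}
  {G : Fin t → SimpleGraph V} [∀ i, DecidableRel (G i).Adj]
  {H : SimpleGraph W} {f : Sym2 W → Fin t} {φ : W → V}
  {H' : SimpleGraph W'} {f' : Sym2 W' → Fin t} {φ' : W' → V} {Δ m : ℕ}

theorem isGood_of_Rval_eq (hgood : IsGood G H f Δ φ (2 * m))
    (hbig : ∀ X : Finset (V × Fin t), m < X.card → X.card ≤ 2 * m → 0 < Rval G H f Δ φ X)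
    {y : V} {a b : V × Fin t} (hy : ∀ X, IsTight G H f Δ φ m a X → y ∉ famNbhd G X)
    (hR : ∀ X, Rval G H' f' Δ φ' X = Rval G H f Δ φ X
      - (if y ∈ famNbhd G X then 1 else 0) + (if a ∈ X then 1 else 0)
      + (if b ∈ X then 1 else 0)) :
    IsGood G H' f' Δ φ' (2 * m) := by
  intro X hX
  rw [hR X]
  have hR₀ := hgood X hX
  by_cases hpos : 0 < Rval G H f Δ φ X
  · split_ifs <;> omega
  have hXm : X.card ≤ m := by
    by_contra! h
    exact hpos (hbig X h hX)
  by_cases ha : a ∈ X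
  · split_ifs <;> omega
  · have := hy X ⟨hXm, by omega, ha⟩
    split_ifs <;> omega

end Goodness

theorem single_extension_step_general {V : Type*} [Fintype V] [DecidableEq V] {Δ m k t : ℕ}
    (hm : 0 < m)
    (G : Fin t → SimpleGraph V) [∀ i, DecidableRel (G i).Adj]
    (h2 : ∀ X : Finset (V × Fin t), m < X.card → X.card ≤ 2 * m →
      Δ * X.card + k ≤ (famNbhd G X).card)
    {W : Type*} [Fintype W] (H : SimpleGraph W) (hW : Fintype.card W ≤ k - 1)
    (f : Sym2 W → Fin t)
    (φ : W → V) (hemb : IsColEmb G H f φ) (hgood : IsGood G H f Δ φ (2 * m))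
    (Hs : SimpleGraph (Option W))
    (hHs : ∀ u v : W, Hs.Adj (some u) (some v) ↔ H.Adj u v)
    (u₀ : W) (hleaf : ∀ w : W, Hs.Adj none (some w) ↔ w = u₀)
    (fs : Sym2 (Option W) → Fin t)
    (hfs : ∀ u v : W, H.Adj u v → fs s(some u, some v) = f s(u, v))
    (hdegs : ∀ (r : Fin t) (v : Option W),
      ({u | Hs.Adj v u ∧ fs s(v, u) = r}).ncard ≤ Δ) :
    ∃ φs : Option W → V, IsColEmb G Hs fs φs ∧ IsGood G Hs fs Δ φs (2 * m) ∧
      ∀ w : W, φs (some w) = φ w := by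
  classical
  have hdeg₀ : preDeg H f φ (fs s(none, some u₀)) (φ u₀) < Δ := by
    have h := hdegs (fs s(none, some u₀)) (some u₀)
    rw [← colorDegree, colorDegree_some hHs hleaf hfs, if_pos ⟨rfl, rfl⟩] at h
    rw [preDeg_apply_of_injective H f hemb.1]
    omega
  have hbig : ∀ X : Finset (V × Fin t), m < X.card → X.card ≤ 2 * m →
      0 < Rval G H f Δ φ X := fun X hXm hX2m => by
    have hN : ((Δ * X.card + k : ℕ) : ℤ) ≤ (famNbhd G X).card := by
      exact_mod_cast h2 X hXm hX2m
    have hWpos : 0 < Fintype.card W := Fintype.card_pos_iff.2 ⟨u₀⟩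
    have := card_famNbhd_sub_le_Rval G H f Δ φ X
    push_cast at hN
    omega
  obtain ⟨y, hy, hy_tight⟩ := exists_neighbor_notMem_famNbhd_of_isTight hm hgood hbig hdeg₀
  obtain ⟨hyadj, hyimage⟩ := mem_sdiff.1 hy
  have hyφ : y ∉ Set.range φ := by simpa using hyimage
  refine ⟨Option.elim' y φ, isColEmb_optionElim hemb hyφ hHs hleaf hfs
    ((SimpleGraph.mem_neighborFinset _ _ _).1 hyadj).symm, ?_, fun _ => rfl⟩
  exact isGood_of_Rval_eq hgood hbig hy_tight
    (Rval_optionElim G H f Δ hyφ (preDeg_optionElim hemb.1 hyφ hHs hleaf hfs))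

/-- **Lemma (single extension step).**
Under the expansion conditions (1) and (2), a `2m`-good embedding of a `[t]`-colored graph
`(H, f)` with at most `k − 1` vertices extends to a `2m`-good embedding of any `[t]`-colored
graph `(H_*, f_*)` obtained by attaching a new leaf, provided the `r`-degrees stay at most `Δ`. -/
theorem single_extension_step {V : Type*} [Fintype V] [DecidableEq V] {Δ m k t : ℕ}
    (hΔ : 0 < Δ) (hm : 0 < m) (hk : 0 < k) (ht : 0 < t)
    (G : Fin t → SimpleGraph V) [∀ i, DecidableRel (G i).Adj]
    (h1 : ∀ X : Finset (V × Fin t), 1 ≤ X.card → X.card ≤ m →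
      Δ * X.card + 1 ≤ (famNbhd G X).card)
    (h2 : ∀ X : Finset (V × Fin t), m < X.card → X.card ≤ 2 * m →
      Δ * X.card + k ≤ (famNbhd G X).card)
    {W : Type*} [Fintype W] (H : SimpleGraph W) (hW : Fintype.card W ≤ k - 1)
    (f : Sym2 W → Fin t)
    (hdeg : ∀ (r : Fin t) (v : W), ({u | H.Adj v u ∧ f s(v, u) = r}).ncard ≤ Δ)
    (φ : W → V) (hemb : IsColEmb G H f φ) (hgood : IsGood G H f Δ φ (2 * m))
    (Hs : SimpleGraph (Option W))
    (hHs : ∀ u v : W, Hs.Adj (some u) (some v) ↔ H.Adj u v)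
    (u₀ : W) (hleaf : ∀ w : W, Hs.Adj none (some w) ↔ w = u₀)
    (fs : Sym2 (Option W) → Fin t)
    (hfs : ∀ u v : W, H.Adj u v → fs s(some u, some v) = f s(u, v))
    (hdegs : ∀ (r : Fin t) (v : Option W),
      ({u | Hs.Adj v u ∧ fs s(v, u) = r}).ncard ≤ Δ) :
    ∃ φs : Option W → V, IsColEmb G Hs fs φs ∧ IsGood G Hs fs Δ φs (2 * m) ∧
      ∀ w : W, φs (some w) = φ w :=
  single_extension_step_general hm G h2 H hW f φ hemb hgood Hs hHs u₀ hleaf fs hfs hdegs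
end

section
/- Let Δ, m, k, t be positive integers and let 𝓖 = {G_1,…,G_t} be a family of graphs on the same vertex set V(𝓖) satisfying |Γ_𝓖(X)| ≥ Δ|X| + k for all X ⊆ V(𝓖) × [t] with m < |X| ≤ 2m. Let 𝓗 be a [t]-colored graph with at most k − 1 vertices and Δ_r(𝓗) ≤ Δ for every r ∈ [t], and let φ be a 2m-good embedding of 𝓗 into 𝓖. If X₁, X₂ ⊆ V(𝓖) × [t] with |X₁|, |X₂| ≤ m satisfy R(X₁, φ) = R(X₂, φ) = 0, then R(X₁ ∪ X₂, φ) = 0 and |X₁ ∪ X₂| ≤ m. -/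
/-- **Fact A3 (union of tight sets).**
If `|Γ_𝓖(X)| ≥ Δ|X| + k` for all `X` with `m < |X| ≤ 2m`, `𝓗` is a `[t]`-colored graph with at
most `k − 1` vertices and `Δ_r(𝓗) ≤ Δ`, `φ` is a `2m`-good embedding, and `X₁, X₂` with
`|X₁|, |X₂| ≤ m` satisfy `R(X₁, φ) = R(X₂, φ) = 0`, then `R(X₁ ∪ X₂, φ) = 0` and
`|X₁ ∪ X₂| ≤ m`. -/
theorem union_of_tight_sets_fact {V : Type*} [Fintype V] [DecidableEq V] {Δ m k t : ℕ}
    (hΔ : 0 < Δ) (hm : 0 < m) (hk : 0 < k) (ht : 0 < t)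
    (G : Fin t → SimpleGraph V) [∀ i, DecidableRel (G i).Adj]
    (h2 : ∀ X : Finset (V × Fin t), m < X.card → X.card ≤ 2 * m →
      Δ * X.card + k ≤ (famNbhd G X).card)
    {W : Type*} [Fintype W] (H : SimpleGraph W) (hW : Fintype.card W ≤ k - 1)
    (f : Sym2 W → Fin t)
    (hdeg : ∀ (r : Fin t) (v : W), ({u | H.Adj v u ∧ f s(v, u) = r}).ncard ≤ Δ)
    (φ : W → V) (hemb : IsColEmb G H f φ) (hgood : IsGood G H f Δ φ (2 * m))
    (X₁ X₂ : Finset (V × Fin t)) (hX₁ : X₁.card ≤ m) (hX₂ : X₂.card ≤ m)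
    (hR₁ : Rval G H f Δ φ X₁ = 0) (hR₂ : Rval G H f Δ φ X₂ = 0) :
    Rval G H f Δ φ (X₁ ∪ X₂) = 0 ∧ (X₁ ∪ X₂).card ≤ m := by
  set A := Finset.image φ Finset.univ with hA
  -- submodularity of the neighborhood part
  have hunion : famNbhd G (X₁ ∪ X₂) = famNbhd G X₁ ∪ famNbhd G X₂ := by
    ext v; simp [famNbhd, or_and_right, exists_or]
  have hinter : famNbhd G (X₁ ∩ X₂) ⊆ famNbhd G X₁ ∩ famNbhd G X₂ := by
    intro v hv
    simp only [famNbhd, Finset.mem_biUnion, Finset.mem_inter] at *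
    obtain ⟨p, ⟨hp1, hp2⟩, hv⟩ := hv
    exact ⟨⟨p, hp1, hv⟩, ⟨p, hp2, hv⟩⟩
  have hcardsub : ((famNbhd G (X₁ ∪ X₂) \ A).card : ℤ)
      + ((famNbhd G (X₁ ∩ X₂) \ A).card : ℤ)
      ≤ ((famNbhd G X₁ \ A).card : ℤ) + ((famNbhd G X₂ \ A).card : ℤ) := by
    have h1 : famNbhd G (X₁ ∪ X₂) \ A = (famNbhd G X₁ \ A) ∪ (famNbhd G X₂ \ A) := by
      rw [hunion, Finset.union_sdiff_distrib]
    have h2' : famNbhd G (X₁ ∩ X₂) \ A ⊆ (famNbhd G X₁ \ A) ∩ (famNbhd G X₂ \ A) := by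
      intro v hv
      rw [Finset.mem_sdiff] at hv
      have := hinter hv.1
      rw [Finset.mem_inter] at this ⊢
      exact ⟨Finset.mem_sdiff.mpr ⟨this.1, hv.2⟩, Finset.mem_sdiff.mpr ⟨this.2, hv.2⟩⟩
    have := Finset.card_union_add_card_inter (famNbhd G X₁ \ A) (famNbhd G X₂ \ A)
    have hle := Finset.card_le_card h2'
    rw [h1]
    push_cast
    omega
  have hsum : (∑ p ∈ X₁ ∪ X₂, ((Δ : ℤ) - (preDeg H f φ p.2 p.1 : ℤ)))
      + (∑ p ∈ X₁ ∩ X₂, ((Δ : ℤ) - (preDeg H f φ p.2 p.1 : ℤ)))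
      = (∑ p ∈ X₁, ((Δ : ℤ) - (preDeg H f φ p.2 p.1 : ℤ)))
      + (∑ p ∈ X₂, ((Δ : ℤ) - (preDeg H f φ p.2 p.1 : ℤ))) :=
    Finset.sum_union_inter
  have hsubmod : Rval G H f Δ φ (X₁ ∪ X₂) + Rval G H f Δ φ (X₁ ∩ X₂)
      ≤ Rval G H f Δ φ X₁ + Rval G H f Δ φ X₂ := by
    simp only [Rval, ← hA]
    linarith
  have hcu : (X₁ ∪ X₂).card ≤ 2 * m := by
    have := Finset.card_union_le X₁ X₂
    omega
  have hgU : 0 ≤ Rval G H f Δ φ (X₁ ∪ X₂) := hgood _ hcu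
  have hgI : 0 ≤ Rval G H f Δ φ (X₁ ∩ X₂) := by
    apply hgood
    have := Finset.card_le_card (Finset.inter_subset_left (s₁ := X₁) (s₂ := X₂))
    omega
  have hRU : Rval G H f Δ φ (X₁ ∪ X₂) = 0 := by
    rw [hR₁, hR₂] at hsubmod; linarith
  refine ⟨hRU, ?_⟩
  by_contra hgt
  push_neg at hgt
  have hΓ := h2 (X₁ ∪ X₂) hgt hcu
  -- bound the card of A
  have hAcard : A.card ≤ k - 1 := le_trans (Finset.card_image_le.trans (by simp)) hW
  have hsd : ((famNbhd G (X₁ ∪ X₂)).card : ℤ) - (A.card : ℤ)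
      ≤ ((famNbhd G (X₁ ∪ X₂) \ A).card : ℤ) := by
    have h1 : famNbhd G (X₁ ∪ X₂) ⊆ (famNbhd G (X₁ ∪ X₂) \ A) ∪ A := by
      intro v hv
      by_cases hvA : v ∈ A
      · exact Finset.mem_union_right _ hvA
      · exact Finset.mem_union_left _ (Finset.mem_sdiff.mpr ⟨hv, hvA⟩)
    have := (Finset.card_le_card h1).trans (Finset.card_union_le _ _)
    push_cast
    omega
  have hsumle : (∑ p ∈ X₁ ∪ X₂, ((Δ : ℤ) - (preDeg H f φ p.2 p.1 : ℤ)))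
      ≤ (Δ : ℤ) * (X₁ ∪ X₂).card := by
    calc (∑ p ∈ X₁ ∪ X₂, ((Δ : ℤ) - (preDeg H f φ p.2 p.1 : ℤ)))
        ≤ ∑ _p ∈ X₁ ∪ X₂, (Δ : ℤ) := by
          apply Finset.sum_le_sum
          intro p _
          have : (0 : ℤ) ≤ (preDeg H f φ p.2 p.1 : ℤ) := Int.natCast_nonneg _
          linarith
      _ = (Δ : ℤ) * (X₁ ∪ X₂).card := by
          rw [Finset.sum_const, nsmul_eq_mul]; ring
  have hpos : 0 < Rval G H f Δ φ (X₁ ∪ X₂) := by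
    have hΓ' : ((Δ : ℤ) * (X₁ ∪ X₂).card + k) ≤ ((famNbhd G (X₁ ∪ X₂)).card : ℤ) := by
      exact_mod_cast hΓ
    have hA' : (A.card : ℤ) ≤ (k : ℤ) - 1 := by
      have : (A.card : ℤ) ≤ ((k - 1 : ℕ) : ℤ) := by exact_mod_cast hAcard
      omega
    simp only [Rval, ← hA]
    linarith
  omega
end

section
/- Let d ≥ 3 be odd and let k be an integer with 1 ≤ k < (d−1)/2. There is a constant c > 0 (depending only on d and k) such that for every odd prime power q and every r ∈ 𝔽_q^*, there are sets X, Y ⊆ 𝔽_q^d with |X| ≥ c·q^{d−k}, |Y| = q^{k+1} − q^k, and ‖x − y‖ ≠ r for every x ∈ X and y ∈ Y. -/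
/-!
Write `d = 2k + 3 + m` and `ε = (-1)^k`. Since `-1` is a sum of two squares in `𝔽_q`, there are
similitudes `(x, y) ↦ x (γ, δ) + y (δ, -γ)` of `𝔽_q²` of ratio `γ² + δ² = ±1`. Chaining `k` of
them with alternating ratios embeds `𝔽_q^(k+1)` into `𝔽_q^(2k+1)` with norm `ε c_k²`: at each
step the previous last direction becomes isotropic, so the first `k` directions span a totally
isotropic subspace. One more similitude turns the last direction into a hyperbolic plane plus a
line of norm `-ε`. Appending `𝔽_q^m` gives an injective linear map `(ξ, c, κ, τ, z) ↦ x` from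
`𝔽_q × 𝔽_q^k × 𝔽_q² × 𝔽_q^m` to `𝔽_q^d` with `‖x‖ = ε (4κτ - ξ²) + ‖z‖²`.

Take `Y = {ξ ≠ 0, κ = τ = z = 0}`; for `X` take `κ ≠ 0` and choose `τ` so that
`4εκτ + ‖z‖² = r + εu` for a nonsquare `u`. Then `‖x - y‖ = r + ε (u - (ξ - a)²) ≠ r`, and
`|X| = q^(k+1) (q - 1) (q - 1)/2 q^m ≥ (2/9) q^(d-k)` since `q ≥ 3`.
-/

/-- The "distance" quadratic form on `F^d`: `‖x‖ = x₁² + ⋯ + x_d²`. -/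
def fnorm {F : Type*} [CommRing F] {d : ℕ} (x : Fin d → F) : F := ∑ i, (x i) ^ 2

open Finset

section

variable {α : Type*} {m n : ℕ}

lemma Fin.append_inj {x x' : Fin m → α} {y y' : Fin n → α} :
    Fin.append x y = Fin.append x' y' ↔ x = x' ∧ y = y' := by
  refine ⟨fun h => ⟨funext fun i => ?_, funext fun j => ?_⟩, fun h => h.1 ▸ h.2 ▸ rfl⟩
  · simpa using congrFun h (Fin.castAdd n i)
  · simpa using congrFun h (Fin.natAdd m j)

variable [Sub α]

lemma Fin.append_sub (x x' : Fin m → α) (y y' : Fin n → α) :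
    Fin.append (x - x') (y - y') = Fin.append x y - Fin.append x' y' := by
  ext i
  refine Fin.addCases (fun i => ?_) (fun j => ?_) i <;> simp

lemma Fin.snoc_sub (c c' : Fin n → α) (a a' : α) :
    (Fin.snoc (c - c') (a - a') : Fin (n + 1) → α) = Fin.snoc c a - Fin.snoc c' a' := by
  ext i
  refine Fin.lastCases ?_ (fun j => ?_) i <;> simp

end

section

variable {R : Type*} [CommRing R]

lemma fnorm_append {m n : ℕ} (x : Fin m → R) (y : Fin n → R) :
    fnorm (Fin.append x y) = fnorm x + fnorm y := by
  simp [fnorm, Fin.sum_univ_add]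

def similitude (g : R × R) (x y : R) : Fin 2 → R := ![g.1 * x + g.2 * y, g.2 * x - g.1 * y]

lemma fnorm_similitude (g : R × R) (x y : R) :
    fnorm (similitude g x y) = (g.1 ^ 2 + g.2 ^ 2) * (x ^ 2 + y ^ 2) := by
  simp [fnorm, similitude, Fin.sum_univ_two]
  ring

lemma similitude_sub (g : R × R) (x y x' y' : R) :
    similitude g (x - x') (y - y') = similitude g x y - similitude g x' y' := by
  ext i
  fin_cases i <;> simp [similitude] <;> ring

def isotropicEmbed (g : ℕ → R × R) : (k : ℕ) → (Fin (k + 1) → R) → Fin (2 * k + 1) → R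
  | 0, c => c
  | k + 1, c => (Fin.append (isotropicEmbed g k (Fin.init c))
      (similitude (g k) (c (Fin.last k).castSucc) (c (Fin.last (k + 1)))) :
        Fin (2 * k + 1 + 2) → R)

def hyperbolicEmbed (g : ℕ → R × R) (k m : ℕ) (ξ : R) (c : Fin k → R) (κ τ : R)
    (z : Fin m → R) : Fin (2 * k + 3 + m) → R :=
  Fin.append (Fin.append (isotropicEmbed g k (Fin.snoc c (κ + τ)))
    (similitude (g k) (κ - τ) ξ) : Fin (2 * k + 1 + 2) → R) z

variable {g : ℕ → R × R} {k m : ℕ}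

lemma isotropicEmbed_sub (c c' : Fin (k + 1) → R) :
    isotropicEmbed g k (c - c') = isotropicEmbed g k c - isotropicEmbed g k c' := by
  induction k with
  | zero => rfl
  | succ k ih =>
    simp only [isotropicEmbed, ← Fin.append_sub, ← similitude_sub, ← ih]
    rfl

lemma hyperbolicEmbed_sub (ξ ξ' κ κ' τ τ' : R) (c c' : Fin k → R) (z z' : Fin m → R) :
    hyperbolicEmbed g k m (ξ - ξ') (c - c') (κ - κ') (τ - τ') (z - z') =
      hyperbolicEmbed g k m ξ c κ τ z - hyperbolicEmbed g k m ξ' c' κ' τ' z' := by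
  simp only [hyperbolicEmbed, ← Fin.append_sub, ← isotropicEmbed_sub, ← similitude_sub,
    ← Fin.snoc_sub, add_sub_add_comm, sub_sub_sub_comm]

lemma fnorm_isotropicEmbed (hg : ∀ j, (g j).1 ^ 2 + (g j).2 ^ 2 = (-1) ^ (j + 1))
    (c : Fin (k + 1) → R) :
    fnorm (isotropicEmbed g k c) = (-1) ^ k * c (Fin.last k) ^ 2 := by
  induction k with
  | zero => simp [isotropicEmbed, fnorm]
  | succ k ih =>
    rw [isotropicEmbed, fnorm_append, ih, fnorm_similitude, hg]
    simp only [Fin.init]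
    ring

lemma fnorm_hyperbolicEmbed (hg : ∀ j, (g j).1 ^ 2 + (g j).2 ^ 2 = (-1) ^ (j + 1))
    (ξ κ τ : R) (c : Fin k → R) (z : Fin m → R) :
    fnorm (hyperbolicEmbed g k m ξ c κ τ z) = (-1) ^ k * (4 * κ * τ - ξ ^ 2) + ∑ i, z i ^ 2 := by
  rw [hyperbolicEmbed, fnorm_append, fnorm_append, fnorm_isotropicEmbed hg, Fin.snoc_last,
    fnorm_similitude, hg, fnorm]
  ring

end

section

variable {F : Type*} [Field F] {g : ℕ → F × F} {k m : ℕ}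

lemma similitude_injective {g : F × F} (hg : g.1 ^ 2 + g.2 ^ 2 ≠ 0) {x y x' y' : F}
    (h : similitude g x y = similitude g x' y') : x = x' ∧ y = y' := by
  have h0 := congrFun h 0
  have h1 := congrFun h 1
  simp only [similitude, Matrix.cons_val_zero, Matrix.cons_val_one] at h0 h1
  constructor <;> apply mul_left_cancel₀ hg
  · linear_combination g.1 * h0 + g.2 * h1
  · linear_combination g.2 * h0 - g.1 * h1

lemma isotropicEmbed_injective (hg : ∀ j, (g j).1 ^ 2 + (g j).2 ^ 2 ≠ 0) (k : ℕ) :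
    Function.Injective (isotropicEmbed g k) := by
  induction k with
  | zero => exact fun _ _ h => h
  | succ k ih =>
    intro c c' h
    simp only [isotropicEmbed, Fin.append_inj] at h
    rw [← Fin.snoc_init_self c, ← Fin.snoc_init_self c', ih h.1,
      (similitude_injective (hg k) h.2).2]

lemma hyperbolicEmbed_injective (h2 : (2 : F) ≠ 0) (hg : ∀ j, (g j).1 ^ 2 + (g j).2 ^ 2 ≠ 0)
    {ξ ξ' κ κ' τ τ' : F} {c c' : Fin k → F} {z z' : Fin m → F}
    (h : hyperbolicEmbed g k m ξ c κ τ z = hyperbolicEmbed g k m ξ' c' κ' τ' z') :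
    ξ = ξ' ∧ c = c' ∧ κ = κ' ∧ τ = τ' ∧ z = z' := by
  simp only [hyperbolicEmbed, Fin.append_inj] at h
  obtain ⟨⟨hiso, hsim⟩, rfl⟩ := h
  obtain ⟨rfl, hsum⟩ := Fin.snoc_inj.mp (isotropicEmbed_injective hg k hiso)
  obtain ⟨hdiff, rfl⟩ := similitude_injective (hg k) hsim
  have hκ : κ = κ' := mul_left_cancel₀ h2 (by linear_combination hsum + hdiff)
  exact ⟨rfl, rfl, hκ, by linear_combination hsum - hκ, rfl⟩

lemma fnorm_hyperbolicEmbed_sub (h2 : (2 : F) ≠ 0)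
    (hg : ∀ j, (g j).1 ^ 2 + (g j).2 ^ 2 = (-1) ^ (j + 1)) {κ : F} (hκ : κ ≠ 0)
    (r u ξ a : F) (c c' : Fin k → F) (z : Fin m → F) :
    fnorm (hyperbolicEmbed g k m ξ c κ ((r + (-1) ^ k * u - ∑ i, z i ^ 2) / (4 * (-1) ^ k * κ)) z -
      hyperbolicEmbed g k m a c' 0 0 0) = r + (-1) ^ k * (u - (ξ - a) ^ 2) := by
  have h4 : (4 : F) ≠ 0 := by simpa [show (4 : F) = 2 * 2 by norm_num] using h2
  rw [← hyperbolicEmbed_sub, fnorm_hyperbolicEmbed hg, sub_zero, sub_zero, sub_zero]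
  field_simp
  ring

end

section

variable {F : Type*} [Field F] [Fintype F]

open Polynomial in
lemma FiniteField.exists_sq_add_sq (hF : Fintype.card F % 2 = 1) (t : F) :
    ∃ a b : F, a ^ 2 + b ^ 2 = t := by
  obtain ⟨a, b, hab⟩ := FiniteField.exists_root_sum_quadratic (f := X ^ 2) (g := X ^ 2 - C t)
    (degree_X_pow 2) (degree_X_pow_sub_C (by decide) t) hF
  exact ⟨a, b, by simpa [← add_sub_assoc, sub_eq_zero] using hab⟩

variable [DecidableEq F]

lemma FiniteField.two_mul_card_nonsquares_add_one (hF : ringChar F ≠ 2) :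
    2 * #{u : F | ¬IsSquare u} + 1 = Fintype.card F := by
  have hχ : ∀ u : F, quadraticChar F u + (if u = 0 then 1 else 0)
      + 2 * (if ¬IsSquare u then 1 else 0) = 1 := by
    intro u
    by_cases hu : u = 0
    · simp [hu]
    by_cases hs : IsSquare u
    · simp [hu, hs, (quadraticChar_one_iff_isSquare hu).mpr hs]
    · simp [hu, hs, quadraticChar_neg_one_iff_not_isSquare.mpr hs]
  have hsum := Finset.sum_congr rfl fun u (_ : u ∈ univ) => hχ u
  simp only [Finset.sum_add_distrib, ← Finset.mul_sum, Finset.sum_boole,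
    quadraticChar_sum_zero hF, Finset.sum_const, card_univ, nsmul_eq_mul, mul_one, filter_eq',
    mem_univ, if_true, card_singleton] at hsum
  omega

lemma exists_avoiding_sets (hF : ringChar F ≠ 2) {g : ℕ → F × F}
    (hg : ∀ j, (g j).1 ^ 2 + (g j).2 ^ 2 = (-1) ^ (j + 1)) (k m : ℕ) (r : F) :
    ∃ X Y : Finset (Fin (2 * k + 3 + m) → F),
      2 * X.card = Fintype.card F ^ (k + 1) * (Fintype.card F - 1) ^ 2 * Fintype.card F ^ m ∧
      Y.card = (Fintype.card F - 1) * Fintype.card F ^ k ∧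
      ∀ x ∈ X, ∀ y ∈ Y, fnorm (x - y) ≠ r := by
  have h2 : (2 : F) ≠ 0 := Ring.two_ne_zero hF
  have hg0 : ∀ j, (g j).1 ^ 2 + (g j).2 ^ 2 ≠ 0 := fun j => by simp [hg]
  set ε : F := (-1) ^ k
  have hε : ε ≠ 0 := by simp [ε]
  let τ (κ u : F) (z : Fin m → F) : F := (r + ε * u - ∑ i, z i ^ 2) / (4 * ε * κ)
  let P : Finset (F × (Fin k → F) × F × F × (Fin m → F)) :=
    univ ×ˢ univ ×ˢ univ.erase 0 ×ˢ ({u | ¬IsSquare u} : Finset F) ×ˢ univ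
  refine ⟨P.image fun p =>
      hyperbolicEmbed g k m p.1 p.2.1 p.2.2.1 (τ p.2.2.1 p.2.2.2.1 p.2.2.2.2) p.2.2.2.2,
    (univ.erase 0 ×ˢ univ).image fun p => hyperbolicEmbed g k m p.1 p.2 0 0 0, ?_, ?_, ?_⟩
  · rw [card_image_of_injOn]
    · have hM := FiniteField.two_mul_card_nonsquares_add_one hF
      simp only [P, card_product, card_univ, Fintype.card_fun, Fintype.card_fin,
        card_erase_of_mem (mem_univ _)]
      rw [← hM, Nat.add_sub_cancel]
      ring
    · rintro ⟨ξ, c, κ, u, z⟩ hp ⟨ξ', c', κ', u', z'⟩ - h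
      simp only [P, coe_product, Set.mem_prod, mem_coe, mem_erase] at hp
      obtain ⟨rfl, rfl, rfl, hτ, rfl⟩ := hyperbolicEmbed_injective h2 hg0 h
      have hκ : 4 * ε * κ ≠ 0 := by simp [hp.2.2.1.1, hε, h2, show (4 : F) = 2 * 2 by norm_num]
      dsimp only [τ] at hτ
      rw [div_left_inj' hκ, sub_left_inj, add_right_inj] at hτ
      rw [mul_left_cancel₀ hε hτ]
  · rw [card_image_of_injective]
    · simp
    · rintro ⟨a, c⟩ ⟨a', c'⟩ h
      obtain ⟨rfl, rfl, -⟩ := hyperbolicEmbed_injective h2 hg0 h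
      rfl
  · simp only [P, mem_image, mem_product, mem_univ, mem_erase, mem_filter, true_and]
    rintro _ ⟨⟨ξ, c, κ, u, z⟩, ⟨⟨hκ, -⟩, hu, -⟩, rfl⟩ _ ⟨⟨a, c'⟩, -, rfl⟩ h
    rw [fnorm_hyperbolicEmbed_sub h2 hg hκ] at h
    exact hu ⟨ξ - a, by simpa [hε, sub_eq_zero, sq] using h⟩

end

theorem zero_distance_construction_general (d k : ℕ) (hk' : k < (d - 1) / 2) :
    ∃ c : ℝ, 0 < c ∧
      ∀ (q : ℕ), Odd q → IsPrimePow q →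
      ∀ (F : Type) [Field F] [Fintype F] [DecidableEq F], Fintype.card F = q →
      ∀ r : F, r ≠ 0 →
      ∃ X Y : Finset (Fin d → F),
        c * (q : ℝ) ^ (d - k) ≤ (X.card : ℝ) ∧
        Y.card = q ^ (k + 1) - q ^ k ∧
        ∀ x ∈ X, ∀ y ∈ Y, fnorm (x - y) ≠ r := by
  refine ⟨2 / 9, by norm_num, fun q hq _ F _ _ _ hcard r _ => ?_⟩
  obtain ⟨m, rfl⟩ : ∃ m, d = 2 * k + 3 + m := ⟨d - (2 * k + 3), by omega⟩
  have hodd : Fintype.card F % 2 = 1 := hcard ▸ Nat.odd_iff.mp hq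
  have hF : ringChar F ≠ 2 := fun h => by simp [FiniteField.even_card_iff_char_two.mp h] at hodd
  obtain ⟨α, β, hαβ⟩ := FiniteField.exists_sq_add_sq hodd (-1)
  obtain ⟨X, Y, hX, hY, hXY⟩ := exists_avoiding_sets hF
    (g := fun j => if Even j then (α, β) else (1, 0))
    (fun j => by rcases Nat.even_or_odd j with hj | hj <;>
      simp [hj, hj.add_one, Nat.not_even_iff_odd.mpr, hαβ]) k m r
  refine ⟨X, Y, ?_, by rw [hY, hcard, Nat.sub_mul, one_mul, pow_succ'], hXY⟩
  have hq3 : 3 ≤ q := by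
    have := hcard ▸ Fintype.one_lt_card (α := F)
    rcases hq with ⟨j, rfl⟩
    omega
  have hXR := congrArg (Nat.cast : ℕ → ℝ) hX
  push_cast [hcard, Nat.cast_sub (by omega : 1 ≤ q)] at hXR
  have hq3R : (3 : ℝ) ≤ q := by exact_mod_cast hq3
  have hP : (0 : ℝ) ≤ q ^ (k + 1) * q ^ m := by positivity
  rw [show 2 * k + 3 + m - k = k + 1 + m + 2 by omega, pow_add, pow_add]
  nlinarith [mul_nonneg hP (by nlinarith : (0 : ℝ) ≤ 9 * (q - 1) ^ 2 - 4 * q ^ 2)]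

/-- **Proposition (avoiding a distance between two large sets).**
For odd `d ≥ 3` and `1 ≤ k < (d−1)/2` there is `c > 0` such that for every odd prime power `q`
and every `r ∈ 𝔽_q^*` there are `X, Y ⊆ 𝔽_q^d` with `|X| ≥ c·q^(d−k)`, `|Y| = q^(k+1) − q^k`,
and no pair of `X × Y` at distance `r`. -/
theorem zero_distance_construction (d k : ℕ) (hd : 3 ≤ d) (hdo : Odd d)
    (hk : 1 ≤ k) (hk' : k < (d - 1) / 2) :
    ∃ c : ℝ, 0 < c ∧
      ∀ (q : ℕ), Odd q → IsPrimePow q →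
      ∀ (F : Type) [Field F] [Fintype F] [DecidableEq F], Fintype.card F = q →
      ∀ r : F, r ≠ 0 →
      ∃ X Y : Finset (Fin d → F),
        c * (q : ℝ) ^ (d - k) ≤ (X.card : ℝ) ∧
        Y.card = q ^ (k + 1) - q ^ k ∧
        ∀ x ∈ X, ∀ y ∈ Y, fnorm (x - y) ≠ r :=
  zero_distance_construction_general d k hk'
end
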